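/- Let A ⊂ Z^n be a finite root-saturated set (after translating by one of its elements into the root lattice), translated so that A ⊂ Z^n with all elements having coordinate sum equal to d > 0. If v is an integer vector with coordinate sum Nd lying in N·conv(A) (the N-fold dilate of the convex hull of A) for some N ≥ 1, then v is a sum of N elements of A. -/

import Mathlib

open Finset Pointwise

/-- Coercion of an integer vector to a real vector. -/
def coeZ {n : ℕ} (v : Fin n → ℤ) : Fin n → ℝ := fun i => (v i : ℝ)

/-- The root `e_i - e_j` of `SL(n, ℂ)`, as an integer vector. -/
def rootZ (n : ℕ) (i j : Fin n) : Fin n → ℤ :=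
  fun t => (if t = i then 1 else 0) - (if t = j then 1 else 0)

/-- The root `e_i - e_j` as a real vector. -/
def rootR (n : ℕ) (i j : Fin n) : Fin n → ℝ :=
  fun t => (if t = i then 1 else 0) - (if t = j then 1 else 0)

/-- A vector is a root of `SL(n, ℂ)`. -/
def IsRootVec {n : ℕ} (v : Fin n → ℤ) : Prop :=
  ∃ i j : Fin n, i ≠ j ∧ v = rootZ n i j

/-- `E` is an edge (a one-dimensional face) of the set `P`. -/
def IsEdge {n : ℕ} (P E : Set (Fin n → ℝ)) : Prop :=
  IsExtreme ℝ P E ∧ Module.finrank ℝ (affineSpan ℝ E).direction = 1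

/-- The edge `E` is parallel to the root `e_i - e_j` for some `i ≠ j`. -/
def EdgeParallelRoot {n : ℕ} (E : Set (Fin n → ℝ)) : Prop :=
  ∃ i j : Fin n, i ≠ j ∧ ∀ x ∈ E, ∀ y ∈ E, ∃ c : ℝ, x - y = c • rootR n i j

/-- A finite subset of the root lattice of `SL(n, ℂ)` is root-saturated if every
edge of its convex hull is parallel to a root, and it equals the intersection of
its convex hull with the root lattice. -/
def RootSaturated {n : ℕ} (A : Finset (Fin n → ℤ)) : Prop :=
  (∀ v ∈ A, ∑ i, v i = 0) ∧
  (∀ E : Set (Fin n → ℝ),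
      IsEdge (convexHull ℝ (coeZ '' (A : Set (Fin n → ℤ)))) E → EdgeParallelRoot E) ∧
  (∀ v : Fin n → ℤ, ∑ i, v i = 0 →
      coeZ v ∈ convexHull ℝ (coeZ '' (A : Set (Fin n → ℤ))) → v ∈ A)

/-- The indicator vector (in `ℤ^n`) of a subset `S ⊆ {1, …, n}`. -/
def indZ {n : ℕ} (S : Finset (Fin n)) : Fin n → ℤ := fun i => if i ∈ S then 1 else 0

/-- The indicator vector (in `ℝ^n`) of a subset `S ⊆ {1, …, n}`. -/
def indR {n : ℕ} (S : Finset (Fin n)) : Fin n → ℝ := fun i => if i ∈ S then 1 else 0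

/-- `B` is the collection of bases of a matroid on `{1, …, n}`: it is nonempty and
satisfies the basis exchange axiom. -/
def IsMatroidBases {n : ℕ} (B : Finset (Finset (Fin n))) : Prop :=
  B.Nonempty ∧
  ∀ B₁ ∈ B, ∀ B₂ ∈ B, ∀ x ∈ B₁ \ B₂, ∃ y ∈ B₂ \ B₁, insert y (B₁.erase x) ∈ B

lemma coeZ_inj {n : ℕ} : Function.Injective (coeZ (n := n)) := by
  intro x y h
  funext i
  have : (x i : ℝ) = (y i : ℝ) := congrFun h i
  exact_mod_cast this

lemma coeZ_sub {n : ℕ} (x y : Fin n → ℤ) : coeZ (x - y) = coeZ x - coeZ y := by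
  funext i; simp [coeZ]

lemma coeZ_add {n : ℕ} (x y : Fin n → ℤ) : coeZ (x + y) = coeZ x + coeZ y := by
  funext i; simp [coeZ]

lemma coeZ_smul {n : ℕ} (c : ℤ) (x : Fin n → ℤ) : coeZ (c • x) = (c : ℝ) • coeZ x := by
  funext i; simp [coeZ]

lemma coeZ_rootZ {n : ℕ} (i j : Fin n) : coeZ (rootZ n i j) = rootR n i j := by
  funext t; simp [coeZ, rootZ, rootR]

lemma coeZ_sum {n : ℕ} {ι : Type*} (s : Finset ι) (g : ι → (Fin n → ℤ)) :
    coeZ (∑ i ∈ s, g i) = ∑ i ∈ s, coeZ (g i) := by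
  funext t
  rw [Finset.sum_apply]
  simp [coeZ]

lemma rootR_self {n : ℕ} (i : Fin n) : rootR n i i = 0 := by
  funext t; simp [rootR]

lemma rootZ_sum {n : ℕ} (i j : Fin n) : ∑ t, rootZ n i j t = 0 := by
  simp [rootZ, Finset.sum_sub_distrib]

lemma rootZ_apply_left {n : ℕ} {i j : Fin n} (h : i ≠ j) : rootZ n i j i = 1 := by
  simp [rootZ, h]

lemma rootZ_apply_right {n : ℕ} {i j : Fin n} (h : i ≠ j) : rootZ n i j j = -1 := by
  simp [rootZ, h.symm]

lemma rootZ_apply_other {n : ℕ} {i j t : Fin n} (h1 : t ≠ i) (h2 : t ≠ j) : rootZ n i j t = 0 := by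
  simp [rootZ, h1, h2]

-- uniqueness: if c • rootZ i j = c' • rootZ p q with c, c' > 0, i≠j, p≠q then p=i, q=j, c=c'
lemma root_repr_unique {n : ℕ} {i j p q : Fin n} {c c' : ℤ} (hij : i ≠ j) (hpq : p ≠ q)
    (hc : 0 < c) (hc' : 0 < c') (h : c • rootZ n i j = c' • rootZ n p q) :
    p = i ∧ q = j ∧ c' = c := by
  have hi := congrFun h i
  have hj := congrFun h j
  have hp := congrFun h p
  simp only [Pi.smul_apply, smul_eq_mul, rootZ_apply_left hij, rootZ_apply_right hij, mul_one,
    mul_neg] at hi hj hp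
  -- (c • rootZ i j) p = c' * 1
  rw [rootZ_apply_left hpq] at hp
  have hpi : p = i := by
    by_contra hne
    rcases eq_or_ne p j with rfl | hpj
    · rw [rootZ_apply_right hij] at hp; omega
    · rw [rootZ_apply_other hne hpj] at hp; omega
  subst hpi
  rw [rootZ_apply_left hpq] at hi
  have hcc : c = c' := by omega
  subst hcc
  have hqj : q = j := by
    by_contra hne
    rw [show rootZ n p q j = 0 from rootZ_apply_other (Ne.symm hij) (Ne.symm hne)] at hj
    omega
  exact ⟨rfl, hqj, rfl⟩


-- halfspace lemmas
lemma hull_mul_proj_le {n : ℕ} {S : Set (Fin n → ℝ)} {a M : ℝ} {t : Fin n}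
    (h : ∀ z ∈ S, a * z t ≤ M) {y : Fin n → ℝ} (hy : y ∈ convexHull ℝ S) : a * y t ≤ M := by
  have hlin : IsLinearMap ℝ (fun z : Fin n → ℝ => a * z t) := by
    constructor <;> intros <;> simp [Pi.add_apply] <;> ring
  exact convexHull_min h (convex_halfSpace_le hlin M) hy

lemma hull_sum_eq {n : ℕ} {S : Set (Fin n → ℝ)} (h : ∀ z ∈ S, ∑ t, z t = 0)
    {y : Fin n → ℝ} (hy : y ∈ convexHull ℝ S) : ∑ t, y t = 0 := by
  have hlin : IsLinearMap ℝ (fun z : Fin n → ℝ => ∑ t, z t) := by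
    constructor <;> intros <;> simp [Finset.sum_add_distrib, Finset.mul_sum]
  have h1 : ∑ t, y t ≤ 0 := convexHull_min (fun z hz => le_of_eq (h z hz)) (convex_halfSpace_le hlin 0) hy
  have h2 : (0:ℝ) ≤ ∑ t, y t := convexHull_min (fun z hz => ge_of_eq (h z hz)) (convex_halfSpace_ge hlin 0) hy
  linarith

-- pair of extreme points is an extreme set
lemma pair_isExtreme {n : ℕ} {P : Set (Fin n → ℝ)} {x y : Fin n → ℝ}
    (hx : x ∈ P.extremePoints ℝ) (hy : y ∈ P.extremePoints ℝ) :
    IsExtreme ℝ P {x, y} := by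
  constructor
  · intro z hz
    rcases hz with rfl | rfl
    exacts [hx.1, hy.1]
  · rintro x₁ hx₁ x₂ hx₂ z hz hzseg
    rcases hz with rfl | rfl
    · have h1 := hx.2 hx₁ hx₂ hzseg
      exact by left; exact h1.symm ▸ rfl
    · have h1 := hy.2 hx₁ hx₂ hzseg
      exact by right; exact h1.symm ▸ rfl

lemma pair_finrank {n : ℕ} {x y : Fin n → ℝ} (hxy : x ≠ y) :
    Module.finrank ℝ (affineSpan ℝ ({x, y} : Set (Fin n → ℝ))).direction = 1 := by
  rw [direction_affineSpan, vectorSpan_pair]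
  have : x -ᵥ y ≠ 0 := by simpa [vsub_eq_sub, sub_eq_zero] using hxy
  exact finrank_span_singleton this

-- hull of finite set equals hull of its extreme points
lemma hull_eq_hull_extremePoints {n : ℕ} {S : Set (Fin n → ℝ)} (hS : S.Finite) :
    convexHull ℝ S = convexHull ℝ ((convexHull ℝ S).extremePoints ℝ) := by
  have hcomp : IsCompact (convexHull ℝ S) := hS.isCompact_convexHull ℝ
  have hconv : Convex ℝ (convexHull ℝ S) := convex_convexHull ℝ S
  have hsub : (convexHull ℝ S).extremePoints ℝ ⊆ S := extremePoints_convexHull_subset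
  have hfin : ((convexHull ℝ S).extremePoints ℝ).Finite := hS.subset hsub
  have := closure_convexHull_extremePoints hcomp hconv
  rw [(hfin.isClosed_convexHull ℝ).closure_eq] at this
  exact this.symm

-- extreme point not in open segment
lemma extreme_not_mid {n : ℕ} {P : Set (Fin n → ℝ)} {u x y : Fin n → ℝ}
    (hu : u ∈ P.extremePoints ℝ) (hx : x ∈ P) (hy : y ∈ P)
    (s t : ℝ) (hs : 0 < s) (ht : 0 < t) (heq : s • (x - u) = t • (u - y)) :
    x = u ∧ y = u := by
  have hst : 0 < s + t := by linarith
  have hmem : u ∈ openSegment ℝ x y := by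
    refine ⟨s / (s + t), t / (s + t), by positivity, by positivity, by field_simp, ?_⟩
    have : s • x + t • y = (s + t) • u := by
      have := heq
      rw [smul_sub, smul_sub] at this
      rw [add_smul]
      abel_nf
      abel_nf at this
      linear_combination (norm := module) this
    calc (s / (s+t)) • x + (t / (s+t)) • y = (s+t)⁻¹ • (s • x + t • y) := by
          rw [smul_add, div_eq_inv_mul, div_eq_inv_mul, mul_smul, mul_smul]
      _ = (s+t)⁻¹ • ((s+t) • u) := by rw [this]
      _ = u := by rw [inv_smul_smul₀ hst.ne']
  exact ⟨hu.2 hx hy hmem, hu.2 hy hx (by rw [openSegment_symm]; exact hmem)⟩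


lemma sub_alloc {ι : Type*} [DecidableEq ι] (J : Finset ι) :
    ∀ (s : ℕ) (m : ι → ℕ), s ≤ ∑ j ∈ J, m j →
    ∃ b : ι → ℕ, (∀ j, b j ≤ m j) ∧ (∑ j ∈ J, b j = s) ∧ (∀ j, j ∉ J → b j = 0) := by
  induction J using Finset.induction_on with
  | empty => intro s m hs; simp at hs; exact ⟨fun _ => 0, fun _ => Nat.zero_le _, by simp [hs], fun _ _ => rfl⟩
  | @insert j J hj ih =>
    intro s m hs
    rw [Finset.sum_insert hj] at hs
    obtain ⟨b, hb1, hb2, hb3⟩ := ih (s - min s (m j)) m (by omega)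
    refine ⟨Function.update b j (min s (m j)), ?_, ?_, ?_⟩
    · intro t
      rcases eq_or_ne t j with rfl | h
      · simp
      · simp [Function.update_of_ne h]; exact hb1 t
    · rw [Finset.sum_insert hj, Function.update_self]
      have : ∑ t ∈ J, Function.update b j (min s (m j)) t = ∑ t ∈ J, b t := by
        apply Finset.sum_congr rfl
        intro t ht
        exact Function.update_of_ne (by rintro rfl; exact hj ht) _ _
      rw [this, hb2]; omega
    · intro t ht
      simp at ht
      rw [Function.update_of_ne (fun h => ht.1 h) _ _]
      exact hb3 t ht.2

lemma nat_decomp {ι : Type*} [DecidableEq ι] (J : Finset ι) (c : ℕ) :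
    ∀ (N : ℕ) (m : ι → ℕ), (∑ j ∈ J, m j ≤ N * c) →
    ∃ a : Fin N → ι → ℕ, (∀ t, ∑ j ∈ J, a t j ≤ c) ∧ (∀ j ∈ J, ∑ t, a t j = m j)
      ∧ (∀ t j, j ∉ J → a t j = 0) := by
  intro N
  induction N with
  | zero =>
    intro m hm
    simp only [Nat.zero_mul, Nat.le_zero, Finset.sum_eq_zero_iff] at hm
    exact ⟨fun t => Fin.elim0 t, fun t => Fin.elim0 t, fun j hj => by simp [hm j hj],
      fun t => Fin.elim0 t⟩
  | succ N ih =>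
    intro m hm
    obtain ⟨b, hb1, hb2, hb3⟩ := sub_alloc J (min c (∑ j ∈ J, m j)) m (Nat.min_le_right _ _)
    obtain ⟨a, ha1, ha2, ha3⟩ := ih (fun j => m j - b j) (by
      have : ∑ j ∈ J, (m j - b j) = ∑ j ∈ J, m j - min c (∑ j ∈ J, m j) := by
        rw [← hb2, ← Finset.sum_tsub_distrib]
        exact fun j _ => hb1 j
      rw [this]
      rcases le_or_gt c (∑ j ∈ J, m j) with h | h
      · rw [min_eq_left h]; rw [Nat.succ_mul] at hm; omega
      · rw [min_eq_right h.le]; omega)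
    refine ⟨Fin.cons b a, ?_, ?_, ?_⟩
    · intro t
      refine Fin.cases ?_ ?_ t
      · simp only [Fin.cons_zero]
        rw [hb2]; exact Nat.min_le_left _ _
      · intro t'; simp only [Fin.cons_succ]; exact ha1 t'
    · intro j hj
      rw [Fin.sum_univ_succ]
      simp only [Fin.cons_zero, Fin.cons_succ]
      rw [ha2 j hj]
      have := hb1 j
      omega
    · intro t j hj
      refine Fin.cases ?_ ?_ t
      · simp only [Fin.cons_zero]; exact hb3 j hj
      · intro t'; simp only [Fin.cons_succ]; exact ha3 t' j hj

lemma rootZ_swap {n : ℕ} (i j : Fin n) : rootZ n j i = -rootZ n i j := by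
  funext t; simp [rootZ]

lemma root_three_support {n : ℕ} {c₃ : ℤ} {a₃ b₃ : Fin n} {D : Fin n → ℤ}
    (h : D = c₃ • rootZ n a₃ b₃) {x y z : Fin n}
    (hxy : x ≠ y) (hxz : x ≠ z) (hyz : y ≠ z)
    (hx : D x ≠ 0) (hy : D y ≠ 0) (hz : D z ≠ 0) : False := by
  have mem : ∀ t, D t ≠ 0 → t = a₃ ∨ t = b₃ := by
    intro t ht
    by_contra hc
    push_neg at hc
    apply ht
    rw [h]
    simp [rootZ_apply_other hc.1 hc.2]
  have h1 := mem x hx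
  have h2 := mem y hy
  have h3 := mem z hz
  rcases h1 with h1 | h1 <;> rcases h2 with h2 | h2 <;> rcases h3 with h3 | h3 <;>
    first
      | exact hxy (h1.trans h2.symm)
      | exact hxz (h1.trans h3.symm)
      | exact hyz (h2.trans h3.symm)

lemma root_comb_cases {n : ℕ} {a₁ b₁ a₂ b₂ a₃ b₃ : Fin n} {c₁ c₂ c₃ : ℤ}
    (h1 : a₁ ≠ b₁) (h2 : a₂ ≠ b₂) (h3 : a₃ ≠ b₃)
    (hc₁ : 0 < c₁) (hc₂ : 0 < c₂) (hc₃ : 0 < c₃)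
    (heq : c₁ • rootZ n a₁ b₁ - c₂ • rootZ n a₂ b₂ = c₃ • rootZ n a₃ b₃)
    (hnpar : ¬(a₁ = a₂ ∧ b₁ = b₂)) (hnanti : ¬(a₁ = b₂ ∧ b₁ = a₂)) :
    (a₁ = a₂ ∧ c₁ = c₂ ∧ b₁ ≠ b₂) ∨ (b₁ = b₂ ∧ c₁ = c₂ ∧ a₁ ≠ a₂) := by
  have heval : ∀ x : Fin n, (c₁ • rootZ n a₁ b₁ - c₂ • rootZ n a₂ b₂) x =
      c₁ * ((if x = a₁ then 1 else 0) - (if x = b₁ then 1 else 0))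
      - c₂ * ((if x = a₂ then 1 else 0) - (if x = b₂ then 1 else 0)) := by
    intro x; simp [rootZ]
  by_cases e1 : a₁ = a₂
  · by_cases e2 : b₁ = b₂
    · exact absurd ⟨e1, e2⟩ hnpar
    · left
      subst e1
      refine ⟨rfl, ?_, e2⟩
      by_contra hcc
      have hb1 : (c₁ • rootZ n a₁ b₁ - c₂ • rootZ n a₁ b₂) b₁ ≠ 0 := by
        rw [heval b₁]; simp [Ne.symm h1, e2]; omega
      have hb2 : (c₁ • rootZ n a₁ b₁ - c₂ • rootZ n a₁ b₂) b₂ ≠ 0 := by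
        rw [heval b₂]; simp [Ne.symm h2, Ne.symm e2]; omega
      have ha : (c₁ • rootZ n a₁ b₁ - c₂ • rootZ n a₁ b₂) a₁ ≠ 0 := by
        rw [heval a₁]; simp [h1, h2]; omega
      exact root_three_support heq h1 h2 e2 ha hb1 hb2
  · by_cases e2 : b₁ = b₂
    · right
      subst e2
      refine ⟨rfl, ?_, e1⟩
      by_contra hcc
      have ha1 : (c₁ • rootZ n a₁ b₁ - c₂ • rootZ n a₂ b₁) a₁ ≠ 0 := by
        rw [heval a₁]; simp [h1, e1]; omega
      have ha2 : (c₁ • rootZ n a₁ b₁ - c₂ • rootZ n a₂ b₁) a₂ ≠ 0 := by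
        rw [heval a₂]; simp [Ne.symm e1, h2]; omega
      have hb : (c₁ • rootZ n a₁ b₁ - c₂ • rootZ n a₂ b₁) b₁ ≠ 0 := by
        rw [heval b₁]; simp [Ne.symm h1, Ne.symm h2]; omega
      exact root_three_support heq e1 h1 h2 ha1 ha2 hb
    · exfalso
      by_cases e3 : a₁ = b₂
      · by_cases e4 : b₁ = a₂
        · exact hnanti ⟨e3, e4⟩
        · subst e3
          have ha1 : (c₁ • rootZ n a₁ b₁ - c₂ • rootZ n a₂ a₁) a₁ ≠ 0 := by
            rw [heval a₁]; simp [h1, e1]; omega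
          have hb1 : (c₁ • rootZ n a₁ b₁ - c₂ • rootZ n a₂ a₁) b₁ ≠ 0 := by
            rw [heval b₁]; simp [Ne.symm h1, e4]; omega
          have ha2 : (c₁ • rootZ n a₁ b₁ - c₂ • rootZ n a₂ a₁) a₂ ≠ 0 := by
            rw [heval a₂]; simp [Ne.symm e1, Ne.symm e4]; omega
          exact root_three_support heq h1 e1 e4 ha1 hb1 ha2
      · by_cases e4 : b₁ = a₂
        · subst e4
          have ha1 : (c₁ • rootZ n a₁ b₁ - c₂ • rootZ n b₁ b₂) a₁ ≠ 0 := by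
            rw [heval a₁]; simp [h1, e3]; omega
          have hb1 : (c₁ • rootZ n a₁ b₁ - c₂ • rootZ n b₁ b₂) b₁ ≠ 0 := by
            rw [heval b₁]; simp [Ne.symm h1, h2]; omega
          have hb2 : (c₁ • rootZ n a₁ b₁ - c₂ • rootZ n b₁ b₂) b₂ ≠ 0 := by
            rw [heval b₂]; simp [Ne.symm e3, Ne.symm e2]; omega
          exact root_three_support heq h1 e3 e2 ha1 hb1 hb2
        · have ha1 : (c₁ • rootZ n a₁ b₁ - c₂ • rootZ n a₂ b₂) a₁ ≠ 0 := by
            rw [heval a₁]; simp [h1, e1, e3]; omega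
          have hb1 : (c₁ • rootZ n a₁ b₁ - c₂ • rootZ n a₂ b₂) b₁ ≠ 0 := by
            rw [heval b₁]; simp [Ne.symm h1, e4, e2]; omega
          have ha2 : (c₁ • rootZ n a₁ b₁ - c₂ • rootZ n a₂ b₂) a₂ ≠ 0 := by
            rw [heval a₂]; simp [Ne.symm e1, Ne.symm e4, h2]; omega
          exact root_three_support heq h1 e1 e4 ha1 hb1 ha2

lemma root_repr_unique' {n : ℕ} {i j p q : Fin n} {c c' : ℤ} (hij : i ≠ j) (hpq : p ≠ q)
    (hc : 0 < c) (hc' : 0 < c') (h : c • rootZ n i j = c' • rootZ n p q) :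
    p = i ∧ q = j ∧ c' = c := by
  have key : ∀ x : Fin n, c * ((if x = i then 1 else 0) - (if x = j then 1 else 0))
      = c' * ((if x = p then 1 else 0) - (if x = q then 1 else 0)) := by
    intro x
    have := congrFun h x
    simpa [rootZ] using this
  have hpi : p = i := by
    by_contra hne
    have hp := key p
    by_cases hpj : p = j
    · rw [if_neg hne, if_pos hpj, if_pos rfl, if_neg hpq] at hp
      omega
    · rw [if_neg hne, if_neg hpj, if_pos rfl, if_neg hpq] at hp
      omega
  have hqj : q = j := by
    by_contra hne2
    have hq := key q
    have hqi : q ≠ i := by rw [← hpi]; exact hpq.symm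
    rw [if_neg hqi, if_neg hne2, if_neg (Ne.symm hpq), if_pos rfl] at hq
    omega
  have hcc : c' = c := by
    have hi := key i
    have hiq : i ≠ q := fun h' => hij (h'.trans hqj)
    rw [if_pos rfl, if_neg hij, if_pos hpi.symm, if_neg hiq] at hi
    omega
  exact ⟨hpi, hqj, hcc⟩

lemma classify {n : ℕ} (VZ : Set (Fin n → ℤ)) (hne : VZ.Nonempty)
    (hpair : ∀ x ∈ VZ, ∀ y ∈ VZ, x ≠ y →
      ∃ i j : Fin n, i ≠ j ∧ ∃ c : ℤ, 0 < c ∧ x - y = c • rootZ n i j)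
    (hnomid : ∀ u ∈ VZ, ∀ x ∈ VZ, ∀ y ∈ VZ, ∀ s t : ℤ, 0 < s → 0 < t →
      s • (x - u) = t • (u - y) → x = u ∧ y = u) :
    ∃ u ∈ VZ, (∀ w ∈ VZ, w = u) ∨
      ∃ i₀ : Fin n, ∃ ς c : ℤ, (ς = 1 ∨ ς = -1) ∧ 0 < c ∧
        ∀ w ∈ VZ, w = u ∨ ∃ j, j ≠ i₀ ∧ w - u = (ς * c) • rootZ n i₀ j := by
  obtain ⟨u, hu⟩ := hne
  refine ⟨u, hu, ?_⟩
  by_cases hsing : ∀ w ∈ VZ, w = u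
  · exact Or.inl hsing
  push_neg at hsing
  obtain ⟨w₀, hw₀, hw₀u⟩ := hsing
  right
  have data : ∀ w ∈ VZ, w ≠ u →
      ∃ a b : Fin n, a ≠ b ∧ ∃ c : ℤ, 0 < c ∧ w - u = c • rootZ n a b :=
    fun w hw hwu => hpair w hw u hu hwu
  obtain ⟨a₀, b₀, hab₀, c₀, hc₀, heq₀⟩ := data w₀ hw₀ hw₀u
  have PR : ∀ w ∈ VZ, ∀ w' ∈ VZ, w ≠ u → w' ≠ u → w ≠ w' →
      ∀ a b a' b' : Fin n, ∀ c c' : ℤ, a ≠ b → a' ≠ b' → 0 < c → 0 < c' →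
      w - u = c • rootZ n a b → w' - u = c' • rootZ n a' b' →
      (a = a' ∧ c = c' ∧ b ≠ b') ∨ (b = b' ∧ c = c' ∧ a ≠ a') := by
    intro w hw w' hw' hwu hw'u hww' a b a' b' c c' hab hab' hc hc' he he'
    obtain ⟨a₃, b₃, hab₃, c₃, hc₃, he₃⟩ := hpair w hw w' hw' hww'
    have heq : c • rootZ n a b - c' • rootZ n a' b' = c₃ • rootZ n a₃ b₃ := by
      rw [← he, ← he', sub_sub_sub_cancel_right, he₃]
    refine root_comb_cases hab hab' hab₃ hc hc' hc₃ heq ?_ ?_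
    · rintro ⟨rfl, rfl⟩
      rcases lt_trichotomy c c' with hlt | heqc | hgt
      · have hmain : c • (w' - w) = (c' - c) • (w - u) := by
          have h5 : w' - w = (w' - u) - (w - u) := by abel
          rw [h5, he, he']
          simp only [smul_sub, smul_smul, ← sub_smul]
          congr 1
          ring
        have := hnomid w hw w' hw' u hu c (c' - c) hc (by omega) hmain
        exact absurd this.1 (Ne.symm hww')
      · apply absurd _ hww'
        have : w - u = w' - u := by rw [he, he', heqc]
        have := congrArg (· + u) this
        simpa [sub_add_cancel] using this
      · have hmain : c' • (w - w') = (c - c') • (w' - u) := by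
          have h5 : w - w' = (w - u) - (w' - u) := by abel
          rw [h5, he, he']
          simp only [smul_sub, smul_smul, ← sub_smul]
          congr 1
          ring
        have := hnomid w' hw' w hw u hu c' (c - c') hc' (by omega) hmain
        exact absurd this.1 hww'
    · rintro ⟨rfl, rfl⟩
      have hw'e : u - w' = c' • rootZ n a b := by
        have : u - w' = -(w' - u) := by abel
        rw [this, he', rootZ_swap]
        simp
      have := hnomid u hu w hw w' hw' c' c hc' hc
        (by rw [he, hw'e, smul_smul, smul_smul, mul_comm])
      exact absurd this.1 hwu
  by_cases hHD : ∀ w ∈ VZ, w ≠ u → ∃ j, j ≠ a₀ ∧ w - u = c₀ • rootZ n a₀ j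
  · refine ⟨a₀, 1, c₀, Or.inl rfl, hc₀, ?_⟩
    intro w hw
    by_cases hwu : w = u
    · exact Or.inl hwu
    · obtain ⟨j, hj, he⟩ := hHD w hw hwu
      exact Or.inr ⟨j, hj, by rw [one_mul]; exact he⟩
  · push_neg at hHD
    obtain ⟨w₁, hw₁, hw₁u, hw₁bad⟩ := hHD
    have hw₁w₀ : w₁ ≠ w₀ := by
      rintro rfl
      exact hw₁bad b₀ (Ne.symm hab₀) heq₀
    obtain ⟨a₁, b₁, hab₁, c₁, hc₁, heq₁⟩ := data w₁ hw₁ hw₁u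
    have h01 := PR w₁ hw₁ w₀ hw₀ hw₁u hw₀u hw₁w₀ a₁ b₁ a₀ b₀ c₁ c₀ hab₁ hab₀ hc₁ hc₀ heq₁ heq₀
    have hTL1 : b₁ = b₀ ∧ c₁ = c₀ ∧ a₁ ≠ a₀ := by
      rcases h01 with ⟨haa, hcc, _⟩ | h
      · exfalso
        refine hw₁bad b₁ ?_ ?_
        · rw [← haa]; exact Ne.symm hab₁
        · rw [← haa, ← hcc]; exact heq₁
      · exact h
    obtain ⟨hb₁b₀, hc₁c₀, ha₁a₀⟩ := hTL1
    refine ⟨b₀, -1, c₀, Or.inr rfl, hc₀, ?_⟩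
    intro w hw
    by_cases hwu : w = u
    · exact Or.inl hwu
    right
    obtain ⟨a, b, hab, c, hc, he⟩ := data w hw hwu
    suffices hbc : b = b₀ ∧ c = c₀ by
      obtain ⟨hb, hcn⟩ := hbc
      refine ⟨a, ?_, ?_⟩
      · rw [← hb]; exact hab
      · rw [neg_one_mul, rootZ_swap, smul_neg, ← neg_smul, neg_neg, ← hb, ← hcn]
        exact he
    by_cases hww₀ : w = w₀
    · have hrr : c • rootZ n a b = c₀ • rootZ n a₀ b₀ := by
        rw [← he, hww₀, heq₀]
      obtain ⟨_, hb, hc'⟩ := root_repr_unique' hab hab₀ hc hc₀ hrr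
      exact ⟨hb.symm, hc'.symm⟩
    · by_cases hww₁ : w = w₁
      · have hrr : c • rootZ n a b = c₁ • rootZ n a₁ b₁ := by
          rw [← he, hww₁, heq₁]
        obtain ⟨_, hb, hc'⟩ := root_repr_unique' hab hab₁ hc hc₁ hrr
        exact ⟨hb.symm.trans hb₁b₀, hc'.symm.trans hc₁c₀⟩
      · have h0 := PR w hw w₀ hw₀ hwu hw₀u hww₀ a b a₀ b₀ c c₀ hab hab₀ hc hc₀ he heq₀
        rcases h0 with ⟨haa₀, hcc₀, hbb₀⟩ | ⟨hbb₀, hcc₀, _⟩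
        · have h1 := PR w hw w₁ hw₁ hwu hw₁u hww₁ a b a₁ b₁ c c₁ hab hab₁ hc hc₁ he heq₁
          rcases h1 with ⟨haa₁, _, _⟩ | ⟨hbb₁, _, _⟩
          · exact absurd (haa₁.symm.trans haa₀) ha₁a₀
          · exact absurd (hbb₁.trans hb₁b₀) hbb₀
        · exact ⟨hbb₀, hcc₀⟩
section MainLemma

lemma rootZ_self {n : ℕ} (i : Fin n) : rootZ n i i = 0 := by
  funext t; simp [rootZ]

lemma eq_of_coords {n : ℕ} {x y : Fin n → ℤ} (i₀ : Fin n)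
    (h : ∀ t, t ≠ i₀ → x t = y t) (hs : ∑ t, x t = ∑ t, y t) : x = y := by
  funext t
  by_cases ht : t = i₀
  · subst ht
    have h1 : ∑ s ∈ Finset.univ.erase t, x s = ∑ s ∈ Finset.univ.erase t, y s := by
      apply Finset.sum_congr rfl
      intro s hs'
      exact h s (Finset.mem_erase.mp hs').1
    have h2 := Finset.add_sum_erase Finset.univ x (Finset.mem_univ t)
    have h3 := Finset.add_sum_erase Finset.univ y (Finset.mem_univ t)
    omega
  · exact h t ht

lemma main_decomp {n : ℕ} (B : Finset (Fin n → ℤ)) (hRS : RootSaturated B) (hBne : B.Nonempty)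
    (N : ℕ) (v : Fin n → ℤ) (hvsum : ∑ i, v i = 0)
    (y : Fin n → ℝ) (hy : y ∈ convexHull ℝ (coeZ '' (B : Set (Fin n → ℤ))))
    (hveq : coeZ v = (N : ℝ) • y) :
    ∃ f : Fin N → (Fin n → ℤ), (∀ t, f t ∈ B) ∧ v = ∑ t, f t := by
  classical
  obtain ⟨hsum0, hedge, hsatur⟩ := hRS
  set S : Set (Fin n → ℝ) := coeZ '' (B : Set (Fin n → ℤ)) with hS
  set P : Set (Fin n → ℝ) := convexHull ℝ S with hP
  have hSfin : S.Finite := B.finite_toSet.image _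
  have hPV : P = convexHull ℝ (P.extremePoints ℝ) := hull_eq_hull_extremePoints hSfin
  set V : Set (Fin n → ℝ) := P.extremePoints ℝ with hV
  have hVS : V ⊆ S := extremePoints_convexHull_subset
  have hVP : V ⊆ P := extremePoints_subset
  set VZ : Set (Fin n → ℤ) := {b | coeZ b ∈ V} with hVZ
  have hVZB : ∀ w ∈ VZ, w ∈ B := by
    intro w hw
    obtain ⟨b, hb, hbe⟩ := hVS hw
    rwa [← coeZ_inj hbe]
  have hVcover : V = coeZ '' VZ := by
    ext z
    constructor
    · intro hz
      obtain ⟨b, hb, rfl⟩ := hVS hz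
      exact ⟨b, hz, rfl⟩
    · rintro ⟨b, hb, rfl⟩
      exact hb
  -- pairwise root condition on VZ
  have hpairZ : ∀ x ∈ VZ, ∀ y' ∈ VZ, x ≠ y' →
      ∃ i j : Fin n, i ≠ j ∧ ∃ c : ℤ, 0 < c ∧ x - y' = c • rootZ n i j := by
    intro x hx y' hy' hxy
    have hxyR : coeZ x ≠ coeZ y' := fun h => hxy (coeZ_inj h)
    have hEdge : IsEdge P {coeZ x, coeZ y'} := ⟨pair_isExtreme hx hy', pair_finrank hxyR⟩
    obtain ⟨i, j, hij, hall⟩ := hedge _ hEdge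
    obtain ⟨cr, hcr⟩ := hall (coeZ x) (Set.mem_insert _ _) (coeZ y')
      (Set.mem_insert_of_mem _ rfl)
    have hcval : cr = ((x i - y' i : ℤ) : ℝ) := by
      have h2 := congrFun hcr i
      simp [rootR, coeZ, hij] at h2
      push_cast
      linarith
    have hxyZ : x - y' = (x i - y' i) • rootZ n i j := by
      apply coeZ_inj
      rw [coeZ_sub, coeZ_smul, coeZ_rootZ, ← hcval, hcr]
    set cZ := x i - y' i with hcZ
    have hcZ0 : cZ ≠ 0 := by
      intro h0
      apply hxy
      rw [h0, zero_smul, sub_eq_zero] at hxyZ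
      exact hxyZ
    rcases lt_or_gt_of_ne hcZ0 with hneg | hpos
    · refine ⟨j, i, hij.symm, -cZ, by omega, ?_⟩
      rw [hxyZ, rootZ_swap]
      simp
    · exact ⟨i, j, hij, cZ, hpos, hxyZ⟩
  -- no mid condition
  have hnomidZ : ∀ u ∈ VZ, ∀ x ∈ VZ, ∀ y' ∈ VZ, ∀ s t : ℤ, 0 < s → 0 < t →
      s • (x - u) = t • (u - y') → x = u ∧ y' = u := by
    intro u hu x hx y' hy' s t hs0 ht0 heq
    have hre : (s : ℝ) • (coeZ x - coeZ u) = (t : ℝ) • (coeZ u - coeZ y') := by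
      have := congrArg coeZ heq
      rw [coeZ_smul, coeZ_smul, coeZ_sub, coeZ_sub] at this
      exact this
    have := extreme_not_mid hu (hVP hx) (hVP hy') (s : ℝ) (t : ℝ)
      (by exact_mod_cast hs0) (by exact_mod_cast ht0) hre
    exact ⟨coeZ_inj this.1, coeZ_inj this.2⟩
  -- nonempty
  have hVZne : VZ.Nonempty := by
    obtain ⟨b, hb⟩ := hBne
    have hPne : P.Nonempty := ⟨coeZ b, subset_convexHull ℝ S ⟨b, hb, rfl⟩⟩
    obtain ⟨z, hz⟩ := hPne
    rw [hPV] at hz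
    have hVne : V.Nonempty := by
      by_contra h
      rw [Set.not_nonempty_iff_eq_empty] at h
      rw [h, convexHull_empty] at hz
      exact hz
    obtain ⟨z', hz'⟩ := hVne
    obtain ⟨b', hb', rfl⟩ := hVS hz'
    exact ⟨b', hz'⟩
  obtain ⟨u, hu, hcases⟩ := classify VZ hVZne hpairZ hnomidZ
  have huB : u ∈ B := hVZB u hu
  have husum : ∑ t, u t = 0 := hsum0 u huB
  rcases hcases with hsing | ⟨i₀, ς, c, hς, hc, hstar⟩
  · -- singleton case
    have hVsingle : V = {coeZ u} := by
      rw [hVcover]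
      ext z
      constructor
      · rintro ⟨b, hb, rfl⟩
        rw [hsing b hb]
        rfl
      · rintro rfl
        exact ⟨u, hu, rfl⟩
    have hPsingle : P = {coeZ u} := by rw [hPV, hVsingle, convexHull_singleton]
    have hyP : y ∈ P := hy
    rw [hPsingle] at hyP
    have hyu : y = coeZ u := hyP
    have hvNu : v = (N : ℤ) • u := by
      apply coeZ_inj
      rw [hveq, hyu, coeZ_smul]
      push_cast
      rfl
    refine ⟨fun _ => u, fun _ => huB, ?_⟩
    rw [hvNu, natCast_zsmul]
    simp
  · -- star case
    have hς2 : ς * ς = 1 := by rcases hς with rfl | rfl <;> norm_num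
    have hcR : (0:ℝ) < (c:ℝ) := by exact_mod_cast hc
    have hςR : (ς:ℝ) * (ς:ℝ) = 1 := by exact_mod_cast hς2
    set J : Finset (Fin n) := Finset.univ.filter
      (fun j => j ≠ i₀ ∧ coeZ (u + (ς * c) • rootZ n i₀ j) ∈ V) with hJ
    have hJne_i : i₀ ∉ J := by simp [hJ]
    have hVmem : ∀ k ∈ insert i₀ J, coeZ (u + (ς * c) • rootZ n i₀ k) ∈ V := by
      intro k hk
      rcases Finset.mem_insert.mp hk with rfl | hkJ
      · rw [rootZ_self, smul_zero, add_zero]; exact hu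
      · exact ((Finset.mem_filter.mp hkJ).2).2
    have hVdesc : ∀ z ∈ V, ∃ k ∈ insert i₀ J, z = coeZ (u + (ς * c) • rootZ n i₀ k) := by
      intro z hz
      rw [hVcover] at hz
      obtain ⟨w, hw, rfl⟩ := hz
      rcases hstar w hw with rfl | ⟨j, hji, hwe⟩
      · exact ⟨i₀, Finset.mem_insert_self _ _, by simp [rootZ_self]⟩
      · have hwu : w = u + (ς * c) • rootZ n i₀ j := by rw [← hwe]; abel
        refine ⟨j, ?_, by rw [← hwu]⟩
        apply Finset.mem_insert_of_mem
        rw [hJ]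
        simp only [Finset.mem_filter, Finset.mem_univ, true_and]
        exact ⟨hji, by rw [← hwu]; exact hw⟩
    have hzcoord : ∀ (k t : Fin n), coeZ (u + (ς * c) • rootZ n i₀ k) t
        = (u t : ℝ) + (ς : ℝ) * (c : ℝ) *
          ((if t = i₀ then 1 else 0) - (if t = k then 1 else 0)) := by
      intro k t
      have h0 : coeZ (u + (ς * c) • rootZ n i₀ k) t
          = ((u t + (ς * c) * (rootZ n i₀ k t) : ℤ) : ℝ) := rfl
      rw [h0]
      simp only [rootZ]
      push_cast [apply_ite (fun z : ℤ => (z : ℝ))]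
      ring
    have hyV : y ∈ convexHull ℝ V := by rw [← hPV]; exact hy
    -- (a) off coordinates
    have hoff : ∀ t, t ≠ i₀ → t ∉ J → y t = (u t : ℝ) := by
      intro t h1 h2
      have hzt : ∀ z ∈ V, z t = (u t : ℝ) := by
        intro z hz
        obtain ⟨k, hk, rfl⟩ := hVdesc z hz
        have htk : t ≠ k := by
          rintro rfl
          rcases Finset.mem_insert.mp hk with h | h
          · exact h1 h
          · exact h2 h
        rw [hzcoord, if_neg h1, if_neg htk]
        ring
      have hle : 1 * y t ≤ (u t : ℝ) :=
        hull_mul_proj_le (fun z hz => by rw [one_mul, hzt z hz]) hyV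
      have hge : -1 * y t ≤ -(u t : ℝ) :=
        hull_mul_proj_le (fun z hz => by rw [hzt z hz]; ring_nf; exact le_refl _) hyV
      linarith
    -- (b) J coordinates bounded
    have hbndJ : ∀ j ∈ J, (ς:ℝ) * y j ≤ (ς:ℝ) * (u j : ℝ) := by
      intro j hj
      have hji₀ : j ≠ i₀ := ((Finset.mem_filter.mp hj).2).1
      refine hull_mul_proj_le ?_ hyV
      intro z hz
      obtain ⟨k, hk, rfl⟩ := hVdesc z hz
      rw [hzcoord, if_neg hji₀]
      by_cases hjk : j = k
      · rw [if_pos hjk]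
        nlinarith
      · rw [if_neg hjk]
        ring_nf
        exact le_refl _
    -- (c) apex coordinate bound
    have hbnd0 : (ς:ℝ) * y i₀ ≤ (ς:ℝ) * (u i₀ : ℝ) + c := by
      refine hull_mul_proj_le ?_ hyV
      intro z hz
      obtain ⟨k, hk, rfl⟩ := hVdesc z hz
      rw [hzcoord, if_pos rfl]
      by_cases hik : i₀ = k
      · rw [if_pos hik]
        ring_nf
        nlinarith
      · rw [if_neg hik]
        nlinarith
    -- (d) sum of y
    have hysum : ∑ t, y t = 0 := by
      refine hull_sum_eq ?_ hyV
      intro z hz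
      obtain ⟨k, hk, rfl⟩ := hVdesc z hz
      have hZs : ∑ t, (u + (ς * c) • rootZ n i₀ k) t = 0 := by
        simp only [Pi.add_apply, Pi.smul_apply, smul_eq_mul, Finset.sum_add_distrib,
          ← Finset.mul_sum, rootZ_sum, husum]
        ring
      calc ∑ t, coeZ (u + (ς * c) • rootZ n i₀ k) t
          = ((∑ t, (u + (ς * c) • rootZ n i₀ k) t : ℤ) : ℝ) := by push_cast [coeZ]; rfl
        _ = 0 := by rw [hZs]; norm_num
    -- coordinates of v
    have hvj : ∀ t, (v t : ℝ) = N * y t := by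
      intro t
      have := congrFun hveq t
      simpa [coeZ] using this
    set m : Fin n → ℕ := fun j => (ς * ((N:ℤ) * u j - v j)).toNat with hm
    have hmJ : ∀ j ∈ J, (m j : ℤ) = ς * ((N:ℤ) * u j - v j) := by
      intro j hj
      rw [hm]
      apply Int.toNat_of_nonneg
      have hreal : ((ς * ((N:ℤ) * u j - v j) : ℤ) : ℝ)
          = N * ((ς:ℝ) * (u j : ℝ) - (ς:ℝ) * y j) := by
        push_cast
        rw [hvj j]
        ring
      have hge : (0:ℝ) ≤ ((ς * ((N:ℤ) * u j - v j) : ℤ) : ℝ) := by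
        rw [hreal]
        have := hbndJ j hj
        have hN0 : (0:ℝ) ≤ (N:ℝ) := Nat.cast_nonneg N
        nlinarith
      exact_mod_cast hge
    have hvoff : ∀ t, t ≠ i₀ → t ∉ J → v t = (N:ℤ) * u t := by
      intro t h1 h2
      have : (v t : ℝ) = (((N:ℤ) * u t : ℤ) : ℝ) := by
        rw [hvj t, hoff t h1 h2]
        push_cast
        ring
      exact_mod_cast this
    have hkey0 : ς * (v i₀ - (N:ℤ) * u i₀) ≤ (N:ℤ) * c := by
      have hN0 : (0:ℝ) ≤ (N:ℝ) := Nat.cast_nonneg N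
      have hstep : ((ς * (v i₀ - (N:ℤ) * u i₀) : ℤ) : ℝ) ≤ (((N:ℤ) * c : ℤ) : ℝ) := by
        push_cast
        rw [hvj i₀]
        nlinarith [hbnd0]
      exact_mod_cast hstep
    have hsumJ : ∑ j ∈ J, ((N:ℤ) * u j - v j) = -((N:ℤ) * u i₀ - v i₀) := by
      have htot : ∑ t, ((N:ℤ) * u t - v t) = 0 := by
        rw [Finset.sum_sub_distrib, ← Finset.mul_sum, husum, hvsum]
        ring
      have h1 : ∑ t ∈ insert i₀ J, ((N:ℤ) * u t - v t) = 0 := by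
        rw [← htot]
        apply Finset.sum_subset (Finset.subset_univ _)
        intro t _ ht
        have ht1 : t ≠ i₀ := fun h => ht (h ▸ Finset.mem_insert_self _ _)
        have ht2 : t ∉ J := fun h => ht (Finset.mem_insert_of_mem h)
        rw [hvoff t ht1 ht2]
        ring
      rw [Finset.sum_insert hJne_i] at h1
      linarith
    have hmsumZ : ∑ j ∈ J, (m j : ℤ) ≤ (N:ℤ) * c := by
      calc ∑ j ∈ J, (m j : ℤ) = ∑ j ∈ J, ς * ((N:ℤ) * u j - v j) :=
            Finset.sum_congr rfl hmJ
        _ = ς * ∑ j ∈ J, ((N:ℤ) * u j - v j) := by rw [Finset.mul_sum]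
        _ = ς * (v i₀ - (N:ℤ) * u i₀) := by rw [hsumJ]; ring
        _ ≤ (N:ℤ) * c := hkey0
    have hmsum : ∑ j ∈ J, m j ≤ N * c.toNat := by
      have h2 : ((∑ j ∈ J, m j : ℕ) : ℤ) ≤ ((N * c.toNat : ℕ) : ℤ) := by
        push_cast
        rw [Int.toNat_of_nonneg hc.le]
        exact_mod_cast hmsumZ
      exact_mod_cast h2
    -- integral representation of v
    have hveqZ : v = (N:ℤ) • u + ∑ j ∈ J, (m j : ℤ) • (ς • rootZ n i₀ j) := by
      apply eq_of_coords i₀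
      · intro t ht
        rw [Pi.add_apply, Finset.sum_apply]
        by_cases htJ : t ∈ J
        · have hone : ∑ j ∈ J, ((m j : ℤ) • (ς • rootZ n i₀ j)) t = -(ς * m t) := by
            rw [Finset.sum_eq_single t]
            · simp [rootZ, ht]
              ring
            · intro b hb hbt
              simp [rootZ, ht, Ne.symm hbt]
            · intro h
              exact absurd htJ h
          rw [hone]
          have h2 := hmJ t htJ
          have h3 : ς * (m t : ℤ) = (N:ℤ) * u t - v t := by
            rw [h2, ← mul_assoc, hς2, one_mul]
          have h4 : ((N:ℤ) • u) t = (N:ℤ) * u t := rfl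
          rw [h4]
          linarith
        · have hzero : ∑ j ∈ J, ((m j : ℤ) • (ς • rootZ n i₀ j)) t = 0 := by
            apply Finset.sum_eq_zero
            intro b hb
            have hbt : t ≠ b := by rintro rfl; exact htJ hb
            simp [rootZ, ht, hbt]
          rw [hzero]
          have h4 : ((N:ℤ) • u) t = (N:ℤ) * u t := rfl
          rw [h4, hvoff t ht htJ]
          ring
      · have hrhs : ∑ t, ((N:ℤ) • u + ∑ j ∈ J, (m j : ℤ) • (ς • rootZ n i₀ j)) t = 0 := by
          simp only [Pi.add_apply, Finset.sum_apply, Pi.smul_apply, smul_eq_mul]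
          rw [Finset.sum_add_distrib, ← Finset.mul_sum, husum]
          rw [Finset.sum_comm]
          have : ∀ j ∈ J, ∑ t, (m j : ℤ) * (ς * rootZ n i₀ j t) = 0 := by
            intro j hj
            rw [← Finset.mul_sum, ← Finset.mul_sum, rootZ_sum]
            ring
          rw [Finset.sum_congr rfl this]
          simp
        rw [hrhs, hvsum]
    -- allocate
    obtain ⟨a, ha1, ha2, ha3⟩ := nat_decomp J c.toNat N m hmsum
    -- membership of star points
    have hmem : ∀ aa : Fin n → ℕ, (∑ j ∈ J, aa j ≤ c.toNat) →
        (u + ∑ j ∈ J, (aa j : ℤ) • (ς • rootZ n i₀ j)) ∈ B := by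
      intro aa haa
      apply hsatur
      · simp only [Pi.add_apply, Finset.sum_apply, Pi.smul_apply, smul_eq_mul]
        rw [Finset.sum_add_distrib, husum, Finset.sum_comm]
        have : ∀ j ∈ J, ∑ t, (aa j : ℤ) * (ς * rootZ n i₀ j t) = 0 := by
          intro j hj
          rw [← Finset.mul_sum, ← Finset.mul_sum, rootZ_sum]
          ring
        rw [Finset.sum_congr rfl this]
        simp
      · -- convex hull membership
        have hconv : Convex ℝ P := convex_convexHull ℝ S
        have hsumaaR : ∑ j ∈ J, ((aa j : ℝ)) ≤ (c:ℝ) := by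
          have h2 : ((∑ j ∈ J, aa j : ℕ) : ℝ) ≤ ((c.toNat : ℕ) : ℝ) := by exact_mod_cast haa
          have hcast : ((c.toNat : ℕ) : ℝ) = (c : ℝ) := by
            rw [← Int.cast_natCast, Int.toNat_of_nonneg hc.le]
          rw [hcast] at h2
          push_cast at h2 ⊢
          exact h2
        set wgt : Fin n → ℝ :=
          fun k => if k = i₀ then 1 - (∑ j ∈ J, (aa j : ℝ))/c else (aa k : ℝ)/c with hwgt
        have hw0 : ∀ k ∈ insert i₀ J, 0 ≤ wgt k := by
          intro k hk
          simp only [hwgt]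
          by_cases hki : k = i₀
          · rw [if_pos hki]
            have h3 : (∑ j ∈ J, (aa j : ℝ))/c ≤ 1 := by
              rw [div_le_one hcR]
              exact hsumaaR
            linarith
          · rw [if_neg hki]
            positivity
        have hwi : wgt i₀ = 1 - (∑ j ∈ J, (aa j : ℝ))/c := by simp [hwgt]
        have hwj : ∀ k ∈ J, wgt k = (aa k : ℝ)/c := by
          intro k hk
          have hki : k ≠ i₀ := by rintro rfl; exact hJne_i hk
          simp [hwgt, hki]
        have hw1 : ∑ k ∈ insert i₀ J, wgt k = 1 := by
          rw [Finset.sum_insert hJne_i, hwi, Finset.sum_congr rfl hwj, ← Finset.sum_div]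
          field_simp
          ring
        have hptP : ∀ k ∈ insert i₀ J, coeZ (u + (ς * c) • rootZ n i₀ k) ∈ P :=
          fun k hk => hVP (hVmem k hk)
        have hmemP := hconv.sum_mem hw0 hw1 hptP
        have heqpt : coeZ (u + ∑ j ∈ J, (aa j : ℤ) • (ς • rootZ n i₀ j))
            = ∑ k ∈ insert i₀ J, wgt k • coeZ (u + (ς * c) • rootZ n i₀ k) := by
          have hLHS : coeZ (u + ∑ j ∈ J, (aa j : ℤ) • (ς • rootZ n i₀ j))
              = coeZ u + ∑ j ∈ J, (((aa j : ℝ)) * (ς : ℝ)) • rootR n i₀ j := by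
            rw [coeZ_add, coeZ_sum]
            congr 1
            apply Finset.sum_congr rfl
            intro j hj
            rw [coeZ_smul, coeZ_smul, coeZ_rootZ, smul_smul]
            norm_num
          have hRHS1 : ∀ k ∈ insert i₀ J, wgt k • coeZ (u + (ς * c) • rootZ n i₀ k)
              = wgt k • coeZ u + (wgt k * (((ς : ℝ)) * (c : ℝ))) • rootR n i₀ k := by
            intro k hk
            rw [coeZ_add, coeZ_smul, coeZ_rootZ, smul_add, smul_smul]
            push_cast
            ring_nf
          rw [hLHS, Finset.sum_congr rfl hRHS1, Finset.sum_add_distrib, ← Finset.sum_smul,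
            hw1, one_smul]
          congr 1
          rw [Finset.sum_insert hJne_i, rootR_self, smul_zero, zero_add]
          apply Finset.sum_congr rfl
          intro j hj
          rw [hwj j hj]
          congr 1
          field_simp
        rw [heqpt]
        exact hmemP
    refine ⟨fun t => u + ∑ j ∈ J, (a t j : ℤ) • (ς • rootZ n i₀ j),
      fun t => hmem _ (ha1 t), ?_⟩
    rw [hveqZ, Finset.sum_add_distrib]
    congr 1
    · rw [Finset.sum_const, Finset.card_univ, Fintype.card_fin, natCast_zsmul]
    · rw [Finset.sum_comm]
      apply Finset.sum_congr rfl
      intro j hj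
      rw [← Finset.sum_smul]
      congr 1
      rw [← Nat.cast_sum, ha2 j hj]


end MainLemma


/-- if `A ⊂ ℤ^n` is finite, root-saturated after translation by one
of its elements, with all coordinate sums equal to `d > 0`, then every integer
vector with coordinate sum `N·d` lying in the `N`-fold dilate of `conv(A)` is a
sum of `N` elements of `A`. -/
theorem dilate_lattice_points_are_sums (n : ℕ) (d : ℕ) (hd : 0 < d)
    (A : Finset (Fin n → ℤ)) (hsum : ∀ a ∈ A, ∑ i, a i = (d : ℤ))
    (hsat : ∃ a ∈ A, RootSaturated (A.image (fun x => x - a)))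
    (N : ℕ) (hN : 1 ≤ N) (v : Fin n → ℤ)
    (hvsum : ∑ i, v i = (N : ℤ) * (d : ℤ))
    (hv : ∃ y ∈ convexHull ℝ (coeZ '' (A : Set (Fin n → ℤ))), coeZ v = (N : ℝ) • y) :
    ∃ f : Fin N → (Fin n → ℤ), (∀ t, f t ∈ A) ∧ v = ∑ t, f t := by
  obtain ⟨a, haA, hRS⟩ := hsat
  set B : Finset (Fin n → ℤ) := A.image (fun x => x - a) with hB
  have hBne : B.Nonempty := ⟨a - a, Finset.mem_image.mpr ⟨a, haA, rfl⟩⟩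
  obtain ⟨y, hy, hveq⟩ := hv
  -- translated hull membership
  have hy' : y - coeZ a ∈ convexHull ℝ (coeZ '' (B : Set (Fin n → ℤ))) := by
    rw [mem_convexHull_iff_exists_fintype] at hy
    obtain ⟨ι, hι, w, z, hw0, hw1, hz, hzy⟩ := hy
    apply mem_convexHull_of_exists_fintype w (fun i => z i - coeZ a) hw0 hw1
    · intro i
      obtain ⟨b, hb, hbe⟩ := hz i
      refine ⟨b - a, ?_, by rw [coeZ_sub, hbe]⟩
      exact Finset.mem_coe.mpr (Finset.mem_image.mpr ⟨b, hb, rfl⟩)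
    · rw [← hzy]
      have : ∑ i, w i • (z i - coeZ a) = ∑ i, (w i • z i - w i • coeZ a) := by
        apply Finset.sum_congr rfl
        intro i _
        rw [smul_sub]
      rw [this, Finset.sum_sub_distrib, ← Finset.sum_smul, hw1, one_smul]
  have hvsum' : ∑ i, (v - (N : ℤ) • a) i = 0 := by
    simp only [Pi.sub_apply, Pi.smul_apply, smul_eq_mul, Finset.sum_sub_distrib,
      ← Finset.mul_sum, hsum a haA, hvsum]
    ring
  have hveq' : coeZ (v - (N : ℤ) • a) = (N : ℝ) • (y - coeZ a) := by
    rw [coeZ_sub, coeZ_smul, hveq, smul_sub]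
    push_cast
    rfl
  obtain ⟨g, hg1, hg2⟩ := main_decomp B hRS hBne N (v - (N : ℤ) • a) hvsum'
    (y - coeZ a) hy' hveq'
  refine ⟨fun t => g t + a, ?_, ?_⟩
  · intro t
    show g t + a ∈ A
    have := hg1 t
    rw [hB] at this
    obtain ⟨x, hx, hxe⟩ := Finset.mem_image.mp this
    rw [show g t = x - a from hxe.symm, sub_add_cancel]
    exact hx
  · show v = ∑ t : Fin N, (g t + a)
    have : ∑ t : Fin N, (g t + a) = (∑ t : Fin N, g t) + (N : ℤ) • a := by
      rw [Finset.sum_add_distrib, Finset.sum_const, Finset.card_univ, Fintype.card_fin,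
        natCast_zsmul]
    rw [this, ← hg2]
    abel
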